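/- arXiv:1206.5556 — 11 statements merged into one kernel-verified Lean document; each statement's English description precedes it below -/
import Mathlib

section
/- For a family of modules {M_i}_{i∈I}, a module N is in the subprojectivity domain of the direct sum ⊕_{i∈I} M_i if and only if N is in the subprojectivity domain of M_i for every i ∈ I. -/
open scoped DirectSum

/-- `M` is `N`-subprojective: every homomorphism `M → N` lifts through every
epimorphism onto `N`. -/
def Subprojective (R : Type) [Ring R] (M N : Type) [AddCommGroup M] [Module R M]
    [AddCommGroup N] [Module R N] : Prop :=
  ∀ (B : Type) [AddCommGroup B] [Module R B] (g : B →ₗ[R] N),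
    Function.Surjective g → ∀ f : M →ₗ[R] N, ∃ h : M →ₗ[R] B, g ∘ₗ h = f

namespace Subprojective

variable {R : Type} [Ring R] {N : Type} [AddCommGroup N] [Module R N]

theorem of_retract {M M' : Type} [AddCommGroup M] [Module R M] [AddCommGroup M'] [Module R M']
    (s : M' →ₗ[R] M) (r : M →ₗ[R] M') (hrs : r ∘ₗ s = LinearMap.id)
    (hM : Subprojective R M N) : Subprojective R M' N := by
  intro B _ _ g hg f
  obtain ⟨h, hh⟩ := hM B g hg (f ∘ₗ r)
  refine ⟨h ∘ₗ s, ?_⟩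
  rw [← LinearMap.comp_assoc, hh, LinearMap.comp_assoc, hrs, LinearMap.comp_id]

variable {ι : Type} {M : ι → Type} [∀ i, AddCommGroup (M i)] [∀ i, Module R (M i)]

theorem of_directSum (hM : Subprojective R (⨁ i, M i) N) (i : ι) : Subprojective R (M i) N := by
  classical
  refine hM.of_retract (DirectSum.lof R ι M i) (DirectSum.component R ι M i) ?_
  ext x
  exact DirectSum.component.lof_self (R := R) i x

theorem directSum (hM : ∀ i, Subprojective R (M i) N) : Subprojective R (⨁ i, M i) N := by
  classical
  intro B _ _ g hg f
  choose h hh using fun i => hM i B g hg (f ∘ₗ DirectSum.lof R ι M i)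
  refine ⟨DirectSum.toModule R ι B h, DirectSum.linearMap_ext R fun i => ?_⟩
  ext x
  simpa [DirectSum.toModule_lof] using LinearMap.congr_fun (hh i) x

end Subprojective

theorem stmt_6_general (R : Type) [Ring R] (ι : Type) (M : ι → Type)
    [∀ i, AddCommGroup (M i)] [∀ i, Module R (M i)]
    (N : Type) [AddCommGroup N] [Module R N] :
    Subprojective R (⨁ i, M i) N ↔ ∀ i, Subprojective R (M i) N :=
  ⟨Subprojective.of_directSum, Subprojective.directSum⟩

theorem stmt_6 (R : Type) [Ring R] (ι : Type) [DecidableEq ι] (M : ι → Type)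
    [∀ i, AddCommGroup (M i)] [∀ i, Module R (M i)]
    (N : Type) [AddCommGroup N] [Module R N] :
    Subprojective R (⨁ i, M i) N ↔ ∀ i, Subprojective R (M i) N :=
  stmt_6_general R ι M N
end

section
/- If M is N-subprojective and A is a direct summand of N, then M is A-subprojective. -/
namespace LinearMap

section ExtendByComplement

variable {R : Type} [Ring R] {N A B : Type} [AddCommGroup N] [Module R N]
  [AddCommGroup A] [Module R A] [AddCommGroup B] [Module R B]
  (i : A →ₗ[R] N) (p : N →ₗ[R] A) (g : B →ₗ[R] A)

def extendByComplement : B × N →ₗ[R] N :=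
  i ∘ₗ g ∘ₗ fst R B N + (id - i ∘ₗ p) ∘ₗ snd R B N

theorem extendByComplement_apply (b : B) (n : N) :
    extendByComplement i p g (b, n) = i (g b) + (n - i (p n)) :=
  rfl

theorem comp_extendByComplement (hpi : p ∘ₗ i = id) :
    p ∘ₗ extendByComplement i p g = g ∘ₗ fst R B N := by
  have hpi' : ∀ a, p (i a) = a := fun a => congr($hpi a)
  refine LinearMap.ext fun ⟨b, n⟩ => ?_
  simp [extendByComplement_apply, hpi']

theorem extendByComplement_surjective {g : B →ₗ[R] A} (hg : Function.Surjective g) :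
    Function.Surjective (extendByComplement i p g) := by
  intro n
  obtain ⟨b, hb⟩ := hg (p n)
  exact ⟨(b, n), by simp [extendByComplement_apply, hb]⟩

end ExtendByComplement

end LinearMap

open LinearMap in
theorem stmt_7 (R : Type) [Ring R] (M N A : Type) [AddCommGroup M] [Module R M]
    [AddCommGroup N] [Module R N] [AddCommGroup A] [Module R A]
    (hMN : Subprojective R M N)
    (i : A →ₗ[R] N) (p : N →ₗ[R] A) (hpi : p ∘ₗ i = LinearMap.id) :
    Subprojective R M A := by
  intro B _ _ g hg f
  obtain ⟨h, hh⟩ :=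
    hMN (B × N) (extendByComplement i p g) (extendByComplement_surjective i p hg) (i ∘ₗ f)
  refine ⟨fst R B N ∘ₗ h, ?_⟩
  calc g ∘ₗ fst R B N ∘ₗ h = p ∘ₗ extendByComplement i p g ∘ₗ h := by
        rw [← comp_assoc, ← comp_extendByComplement i p g hpi, comp_assoc]
    _ = f := by rw [hh, ← comp_assoc, hpi, id_comp]
end

section
/- If M is A-subprojective and M is B-subprojective, then M is (A ⊕ B)-subprojective. -/
namespace Subprojective

variable {R : Type} [Ring R] {M N : Type} [AddCommGroup M] [Module R M]
  [AddCommGroup N] [Module R N]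

theorem of_linearEquiv {N' : Type} [AddCommGroup N'] [Module R N']
    (hN : Subprojective R M N) (e : N ≃ₗ[R] N') : Subprojective R M N' := by
  intro C _ _ g hg f
  obtain ⟨h, hh⟩ := hN C (e.symm.toLinearMap ∘ₗ g) (e.symm.surjective.comp hg)
    (e.symm.toLinearMap ∘ₗ f)
  refine ⟨h, LinearMap.ext fun m => e.symm.injective ?_⟩
  exact LinearMap.congr_fun hh m

theorem of_ker {B : Type} [AddCommGroup B] [Module R B] (p : N →ₗ[R] B)
    (hp : Function.Surjective p) (hK : Subprojective R M (LinearMap.ker p))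
    (hB : Subprojective R M B) : Subprojective R M N := by
  intro C _ _ g hg f
  obtain ⟨h₁, hh₁⟩ := hB C (p ∘ₗ g) (hp.comp hg) (p ∘ₗ f)
  let P := (LinearMap.ker p).comap g
  let g' : P →ₗ[R] LinearMap.ker p := g.restrict fun _ hc => hc
  have hg' : Function.Surjective g' := by
    rintro ⟨y, hy⟩
    obtain ⟨c, rfl⟩ := hg y
    exact ⟨⟨c, hy⟩, rfl⟩
  have herr : ∀ m, f m - g (h₁ m) ∈ LinearMap.ker p := fun m => by
    rw [LinearMap.mem_ker, map_sub, sub_eq_zero]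
    exact (LinearMap.congr_fun hh₁ m).symm
  obtain ⟨h₂, hh₂⟩ := hK P g' hg' ((f - g ∘ₗ h₁).codRestrict _ herr)
  refine ⟨h₁ + P.subtype ∘ₗ h₂, LinearMap.ext fun m => ?_⟩
  have hm : g (h₂ m) = f m - g (h₁ m) := congr_arg Subtype.val (LinearMap.congr_fun hh₂ m)
  simp only [LinearMap.comp_apply, LinearMap.add_apply, map_add, Submodule.subtype_apply, hm,
    add_sub_cancel]

theorem of_exact {A B : Type} [AddCommGroup A] [Module R A] [AddCommGroup B] [Module R B]
    {i : A →ₗ[R] N} {p : N →ₗ[R] B} (hi : Function.Injective i) (hip : Function.Exact i p)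
    (hp : Function.Surjective p) (hA : Subprojective R M A) (hB : Subprojective R M B) :
    Subprojective R M N :=
  of_ker p hp (hA.of_linearEquiv <|
    LinearEquiv.ofInjective i hi ≪≫ₗ LinearEquiv.ofEq _ _ hip.linearMap_ker_eq.symm) hB

end Subprojective

theorem stmt_8 (R : Type) [Ring R] (M A B : Type) [AddCommGroup M] [Module R M]
    [AddCommGroup A] [Module R A] [AddCommGroup B] [Module R B]
    (hA : Subprojective R M A) (hB : Subprojective R M B) :
    Subprojective R M (A × B) :=
  Subprojective.of_exact LinearMap.inl_injective Function.Exact.inl_snd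
    LinearMap.snd_surjective hA hB
end

section
/- If M is a finitely generated module and M is A_i-subprojective for every i in an index set I, then M is (⊕_{i∈I} A_i)-subprojective. -/
open scoped DirectSum

/-! Since `M` is finitely generated, a map `f : M → ⨁ i, A i` lands in finitely many summands
and is the finite sum of its components `M → A i → ⨁ i, A i`. Each component lifts through an
epimorphism `g`, by `A i`-subprojectivity applied to the pullback of `g` along the inclusion of
`A i`, and so does their sum. -/

section
variable {R : Type} [Ring R] {M : Type} [AddCommGroup M] [Module R M]

theorem DirectSum.exists_finset_sum_lof_comp_component_comp [Module.Finite R M] {ι : Type}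
    [DecidableEq ι] {A : ι → Type} [∀ i, AddCommGroup (A i)] [∀ i, Module R (A i)]
    (f : M →ₗ[R] ⨁ i, A i) :
    ∃ s : Finset ι, ∑ i ∈ s, lof R ι A i ∘ₗ component R ι A i ∘ₗ f = f := by
  classical
  obtain ⟨S, hS⟩ := Module.Finite.fg_top (R := R) (M := M)
  refine ⟨S.biUnion fun x => (f x).support, LinearMap.ext_on hS fun x hx => ?_⟩
  have hsupp : (f x).support ⊆ S.biUnion fun x => (f x).support :=
    Finset.subset_biUnion_of_mem (fun x => (f x).support) hx
  rw [LinearMap.sum_apply]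
  calc ∑ i ∈ S.biUnion (fun x => (f x).support), lof R ι A i (f x i)
      = ∑ i ∈ (f x).support, of A i (f x i) := by
        refine (Finset.sum_subset hsupp fun i _ hi => ?_).symm
        rw [DFinsupp.notMem_support_iff.mp hi, map_zero]
    _ = f x := sum_support_of (f x)

theorem LinearMap.exists_comp_eq_sum {ι B P : Type} [AddCommGroup B] [Module R B]
    [AddCommGroup P] [Module R P] (g : B →ₗ[R] P) (s : Finset ι) (f : ι → M →ₗ[R] P)
    (hf : ∀ i ∈ s, ∃ h : M →ₗ[R] B, g ∘ₗ h = f i) :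
    ∃ h : M →ₗ[R] B, g ∘ₗ h = ∑ i ∈ s, f i := by
  choose! h hh using hf
  refine ⟨∑ i ∈ s, h i, LinearMap.ext fun x => ?_⟩
  simp only [LinearMap.comp_apply, LinearMap.sum_apply, map_sum]
  exact Finset.sum_congr rfl fun i hi => LinearMap.congr_fun (hh i hi) x

variable {N : Type} [AddCommGroup N] [Module R N]

-- `h` factors through the pullback of `g` along `e`, which maps onto `N` because `g` is onto.
theorem Subprojective.exists_comp_eq_comp (hM : Subprojective R M N) {B P : Type}
    [AddCommGroup B] [Module R B] [AddCommGroup P] [Module R P] {g : B →ₗ[R] P}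
    (hg : Function.Surjective g) (e : N →ₗ[R] P) (f : M →ₗ[R] N) :
    ∃ h : M →ₗ[R] B, g ∘ₗ h = e ∘ₗ f := by
  let pullback := LinearMap.ker (g ∘ₗ LinearMap.fst R B N - e ∘ₗ LinearMap.snd R B N)
  have hsnd : Function.Surjective (LinearMap.snd R B N ∘ₗ pullback.subtype) := fun n => by
    obtain ⟨b, hb⟩ := hg (e n)
    exact ⟨⟨(b, n), by simp [pullback, hb]⟩, rfl⟩
  obtain ⟨h, hh⟩ := hM pullback _ hsnd f
  refine ⟨LinearMap.fst R B N ∘ₗ pullback.subtype ∘ₗ h, ?_⟩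
  rw [← hh]
  ext x
  simpa only [pullback, LinearMap.mem_ker, LinearMap.sub_apply, LinearMap.comp_apply,
    Submodule.subtype_apply, sub_eq_zero] using (h x).2
end

theorem stmt_9 (R : Type) [Ring R] (M : Type) [AddCommGroup M] [Module R M]
    [Module.Finite R M] (ι : Type) [DecidableEq ι] (A : ι → Type)
    [∀ i, AddCommGroup (A i)] [∀ i, Module R (A i)]
    (hA : ∀ i, Subprojective R M (A i)) :
    Subprojective R M (⨁ i, A i) := by
  intro B _ _ g hg f
  obtain ⟨s, hs⟩ := DirectSum.exists_finset_sum_lof_comp_component_comp f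
  rw [← hs]
  exact g.exists_comp_eq_sum s _ fun i _ => (hA i).exists_comp_eq_comp hg _ _
end

section
/- If R is a right hereditary ring, M is a right R-module, K is in the subprojectivity domain of M, and N is a submodule of K, then N is in the subprojectivity domain of M. -/
namespace Subprojective

variable {R : Type} [Ring R] {M N : Type} [AddCommGroup M] [Module R M]
  [AddCommGroup N] [Module R N]

theorem of_forall_factors_through_projective
    (hfac : ∀ f : M →ₗ[R] N, ∃ (P : Type) (_ : AddCommGroup P) (_ : Module R P)
      (_ : Module.Projective R P) (π : P →ₗ[R] N) (h : M →ₗ[R] P), π ∘ₗ h = f) :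
    Subprojective R M N := by
  intro B _ _ g hg f
  obtain ⟨P, _, _, _, π, h, rfl⟩ := hfac f
  obtain ⟨φ, hφ⟩ := Module.projective_lifting_property g π hg
  exact ⟨φ ∘ₗ h, by rw [← LinearMap.comp_assoc, hφ]⟩

theorem exists_submoduleComap_comp_eq {K P : Type} [AddCommGroup K] [Module R K]
    [AddCommGroup P] [Module R P] (hK : Subprojective R M K) (π : P →ₗ[R] K)
    (hπ : Function.Surjective π) (N : Submodule R K) (f : M →ₗ[R] N) :
    ∃ h : M →ₗ[R] N.comap π, π.submoduleComap N ∘ₗ h = f := by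
  obtain ⟨h, hh⟩ := hK P π hπ (N.subtype ∘ₗ f)
  have hπh : ∀ m, π (h m) = f m := fun m => LinearMap.congr_fun hh m
  refine ⟨h.codRestrict _ fun m => ?_, ?_⟩
  · rw [Submodule.mem_comap, hπh]
    exact (f m).2
  · ext m
    exact hπh m

end Subprojective

theorem stmt_10 (R : Type) [Ring R]
    (hered : ∀ (P : Type) (_ : AddCommGroup P) (_ : Module R P),
      Module.Projective R P → ∀ S : Submodule R P, Module.Projective R S)
    (M K : Type) [AddCommGroup M] [Module R M] [AddCommGroup K] [Module R K]
    (hK : Subprojective R M K) (N : Submodule R K) :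
    Subprojective R M N := by
  refine Subprojective.of_forall_factors_through_projective fun f => ?_
  let π : (K →₀ R) →ₗ[R] K := Finsupp.linearCombination R id
  obtain ⟨h, hh⟩ :=
    hK.exists_submoduleComap_comp_eq π (Finsupp.linearCombination_id_surjective R K) N f
  exact ⟨N.comap π, inferInstance, inferInstance, hered _ _ _ inferInstance _,
    π.submoduleComap N, h, hh⟩
end

section
/- For a right R-module M, the subprojectivity domain of M is closed under quotients if and only if M is projective. -/
section

variable {R : Type} [Ring R] {M N N' : Type} [AddCommGroup M] [Module R M]
  [AddCommGroup N] [Module R N] [AddCommGroup N'] [Module R N']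

theorem subprojective_of_projective_left [Module.Projective R M] : Subprojective R M N :=
  fun _ _ _ g hg f => Module.projective_lifting_property g f hg

theorem subprojective_of_projective_right [Module.Projective R N] : Subprojective R M N := by
  intro B _ _ g hg f
  obtain ⟨s, hs⟩ := Module.projective_lifting_property g LinearMap.id hg
  exact ⟨s ∘ₗ f, by rw [← LinearMap.comp_assoc, hs, LinearMap.id_comp]⟩

theorem Subprojective.of_linearEquiv_s11 (e : N ≃ₗ[R] N') (hN : Subprojective R M N) :
    Subprojective R M N' := by
  intro B _ _ g hg f
  obtain ⟨h, hh⟩ := hN B (e.symm.toLinearMap ∘ₗ g) (e.symm.surjective.comp hg)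
    (e.symm.toLinearMap ∘ₗ f)
  refine ⟨h, LinearMap.ext fun m => e.symm.injective ?_⟩
  simpa using LinearMap.congr_fun hh m

theorem projective_of_subprojective_self (hM : Subprojective R M M) : Module.Projective R M := by
  obtain ⟨s, hs⟩ := hM (M →₀ R) (Finsupp.linearCombination R id)
    (Finsupp.linearCombination_id_surjective R M) LinearMap.id
  exact Module.projective_def'.mpr ⟨s, hs⟩

end

theorem stmt_11 (R : Type) [Ring R] (M : Type) [AddCommGroup M] [Module R M] :
    (∀ (N : Type) (_ : AddCommGroup N) (_ : Module R N),
      Subprojective R M N → ∀ S : Submodule R N, Subprojective R M (N ⧸ S)) ↔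
      Module.Projective R M := by
  refine ⟨fun hquot => ?_, fun _ _ _ _ _ _ => subprojective_of_projective_left⟩
  let π : (M →₀ R) →ₗ[R] M := Finsupp.linearCombination R id
  have hfree : Subprojective R M ((M →₀ R) ⧸ LinearMap.ker π) :=
    hquot _ _ _ subprojective_of_projective_right _
  exact projective_of_subprojective_self <| hfree.of_linearEquiv_s11 <|
    π.quotKerEquivOfSurjective (Finsupp.linearCombination_id_surjective R M)
end

section
/- If M is a right R-module with Hom_R(M, R) = 0, then the subprojectivity domain of M equals the class {N : Hom_R(M, N) = 0}. -/
theorem LinearMap.eq_zero_of_forall_dual_eq_zero {R M ι : Type*} [Semiring R]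
    [AddCommMonoid M] [Module R M] (hMR : ∀ f : M →ₗ[R] R, f = 0) (h : M →ₗ[R] ι →₀ R) :
    h = 0 := by
  ext m i
  simpa using congr($(hMR (Finsupp.lapply i ∘ₗ h)) m)

section Subprojective

variable {R M N : Type} [Ring R] [AddCommGroup M] [Module R M] [AddCommGroup N] [Module R N]

theorem Subprojective.of_forall_eq_zero (h : ∀ f : M →ₗ[R] N, f = 0) : Subprojective R M N :=
  fun _ _ _ _ _ f => ⟨0, by rw [h f, LinearMap.comp_zero]⟩

theorem Subprojective.exists_factor_finsupp (hs : Subprojective R M N) (f : M →ₗ[R] N) :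
    ∃ h : M →ₗ[R] N →₀ R, Finsupp.linearCombination R id ∘ₗ h = f :=
  hs _ _ (Finsupp.linearCombination_id_surjective R N) f

theorem Subprojective.eq_zero_of_forall_dual_eq_zero (hs : Subprojective R M N)
    (hMR : ∀ f : M →ₗ[R] R, f = 0) (f : M →ₗ[R] N) : f = 0 := by
  obtain ⟨h, rfl⟩ := hs.exists_factor_finsupp f
  rw [LinearMap.eq_zero_of_forall_dual_eq_zero hMR h, LinearMap.comp_zero]

end Subprojective

theorem stmt_12 (R : Type) [Ring R] (M : Type) [AddCommGroup M] [Module R M]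
    (hMR : ∀ f : M →ₗ[R] R, f = 0)
    (N : Type) [AddCommGroup N] [Module R N] :
    Subprojective R M N ↔ ∀ f : M →ₗ[R] N, f = 0 :=
  ⟨fun hs => hs.eq_zero_of_forall_dual_eq_zero hMR, Subprojective.of_forall_eq_zero⟩
end

section
/- The subprojectivity domain of the ℤ-module ℚ is exactly the class of reduced abelian groups, i.e., abelian groups N with Hom_ℤ(ℚ, N) = 0. -/
theorem LinearMap.eq_zero_of_divisibleBy_int {A : Type*} [AddCommGroup A] [DivisibleBy A ℤ]
    (f : A →ₗ[ℤ] ℤ) : f = 0 := by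
  ext a
  have hdvd : ∀ n : ℤ, n ≠ 0 → n ∣ f a := fun n hn =>
    ⟨f (DivisibleBy.div a n), by rw [← smul_eq_mul, ← map_zsmul, DivisibleBy.div_cancel a hn]⟩
  exact Int.eq_zero_of_abs_lt_dvd (hdvd _ (by positivity)) (lt_add_one |f a|)

theorem LinearMap.eq_zero_of_divisibleBy_int_of_free {A F : Type*} [AddCommGroup A]
    [DivisibleBy A ℤ] [AddCommGroup F] [Module.Free ℤ F] (f : A →ₗ[ℤ] F) : f = 0 := by
  let b := Module.Free.chooseBasis ℤ F
  ext a
  refine b.ext_elem fun i => ?_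
  simpa using LinearMap.congr_fun ((b.coord i ∘ₗ f).eq_zero_of_divisibleBy_int) a

theorem Subprojective.eq_zero {R M N : Type} [Ring R] [AddCommGroup M] [Module R M]
    [AddCommGroup N] [Module R N] (h : Subprojective R M N)
    (hfree : ∀ g : M →ₗ[R] (N →₀ R), g = 0) (f : M →ₗ[R] N) : f = 0 := by
  obtain ⟨g, hg⟩ := h (N →₀ R) (Finsupp.linearCombination R id)
    (Finsupp.linearCombination_surjective R Function.surjective_id) f
  rw [← hg, hfree g, LinearMap.comp_zero]

theorem subprojective_of_forall_eq_zero {R M N : Type} [Ring R] [AddCommGroup M] [Module R M]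
    [AddCommGroup N] [Module R N] (h : ∀ f : M →ₗ[R] N, f = 0) : Subprojective R M N :=
  fun _ _ _ _ _ f => ⟨0, by rw [h f, LinearMap.comp_zero]⟩

theorem stmt_13 (N : Type) [AddCommGroup N] :
    Subprojective ℤ ℚ N ↔ ∀ f : ℚ →ₗ[ℤ] N, f = 0 :=
  ⟨fun h => h.eq_zero LinearMap.eq_zero_of_divisibleBy_int_of_free,
    subprojective_of_forall_eq_zero⟩
end

section
/- Let M be a right R-module whose subprojectivity domain equals the class of modules having no direct summand isomorphic to M. If N is a module whose subprojectivity domain strictly contains that of M, then N is projective. -/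
/-- `M` is isomorphic to a direct summand of `K`: there is a split injection `M → K`. -/
def HasSummandIso (R : Type) [Ring R] (M K : Type) [AddCommGroup M] [Module R M]
    [AddCommGroup K] [Module R K] : Prop :=
  ∃ (i : M →ₗ[R] K) (p : K →ₗ[R] M), p ∘ₗ i = LinearMap.id

/-!
If `M` were a direct summand of `N`, every module in the subprojectivity domain of `N` would lie
in that of `M`, against the strict inclusion. Hence `N` has no summand isomorphic to `M`, so `N`
lies in the domain of `M`, hence in that of `N`. A module that is subprojective relative to
itself is projective: lift the identity through a free presentation.
-/

theorem Subprojective.of_hasSummandIso {R : Type} [Ring R] {M N K : Type}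
    [AddCommGroup M] [Module R M] [AddCommGroup N] [Module R N] [AddCommGroup K] [Module R K]
    (hMN : HasSummandIso R M N) (hNK : Subprojective R N K) : Subprojective R M K := by
  obtain ⟨i, p, hpi⟩ := hMN
  intro B _ _ g hg f
  obtain ⟨h, hh⟩ := hNK B g hg (f ∘ₗ p)
  refine ⟨h ∘ₗ i, ?_⟩
  rw [← LinearMap.comp_assoc, hh, LinearMap.comp_assoc, hpi, LinearMap.comp_id]

theorem Module.projective_of_subprojective_self {R : Type} [Ring R] {N : Type}
    [AddCommGroup N] [Module R N] (hN : Subprojective R N N) : Module.Projective R N := by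
  rw [Module.projective_def']
  exact hN (N →₀ R) (Finsupp.linearCombination R (LinearMap.id : N →ₗ[R] N))
    (Finsupp.linearCombination_id_surjective R N) LinearMap.id

theorem stmt_15 (R : Type) [Ring R] (M N : Type) [AddCommGroup M] [Module R M]
    [AddCommGroup N] [Module R N]
    (hM : ∀ (K : Type) (_ : AddCommGroup K) (_ : Module R K),
      Subprojective R M K ↔ ¬ HasSummandIso R M K)
    (hsub : ∀ (K : Type) (_ : AddCommGroup K) (_ : Module R K),
      Subprojective R M K → Subprojective R N K)
    (hstrict : ∃ (K : Type) (_ : AddCommGroup K) (_ : Module R K),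
      Subprojective R N K ∧ ¬ Subprojective R M K) :
    Module.Projective R N := by
  obtain ⟨K, _, _, hNK, hMK⟩ := hstrict
  have hnoMN : ¬ HasSummandIso R M N := fun hMN => hMK (hNK.of_hasSummandIso hMN)
  have hNN : Subprojective R N N := hsub N _ _ ((hM N _ _).mpr hnoMN)
  exact Module.projective_of_subprojective_self hNN
end

section
/- Every homomorphism of abelian groups f: ∏_{i∈ℕ} (ℤ/p_iℤ) → ℤ is zero, where p_1 < p_2 < ... is the increasing sequence of all rational primes. -/
theorem stmt_17 (f : ((i : ℕ) → ZMod (Nat.nth Nat.Prime i)) →+ ℤ) : f = 0 := by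
  ext x
  simp only [AddMonoidHom.zero_apply]
  have hprime : ∀ i, (Nat.nth Nat.Prime i).Prime := Nat.prime_nth_prime
  have key : ∀ n : ℕ, 0 < n → (n : ℤ) ∣ f x := by
    intro n hn
    classical
    set z : (i : ℕ) → ZMod ((Nat.nth Nat.Prime i)) := fun i =>
      if (Nat.nth Nat.Prime i) ∣ n then 0 else ((n : ZMod ((Nat.nth Nat.Prime i))))⁻¹ * x i with hz
    set t : (i : ℕ) → ZMod ((Nat.nth Nat.Prime i)) := x - n • z with ht
    have hunit : ∀ i, ¬ (Nat.nth Nat.Prime i) ∣ n → IsUnit (n : ZMod ((Nat.nth Nat.Prime i))) := by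
      intro i hdvd
      rw [ZMod.isUnit_iff_coprime]
      exact (Nat.Coprime.symm (((hprime i).coprime_iff_not_dvd).mpr hdvd))
    have htcoord : ∀ i, ¬ (Nat.nth Nat.Prime i) ∣ n → t i = 0 := by
      intro i hdvd
      simp only [ht, hz, Pi.sub_apply, Pi.smul_apply, if_neg hdvd]
      rw [nsmul_eq_mul, ← mul_assoc, ZMod.mul_inv_of_unit _ (hunit i hdvd), one_mul,
        sub_self]
    -- t is torsion, killed by m
    set m : ℕ := ∏ i ∈ Finset.range (n + 1), (Nat.nth Nat.Prime i) with hm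
    have hmpos : 0 < m := Finset.prod_pos fun i _ => (hprime i).pos
    have hmt : m • t = 0 := by
      funext i
      by_cases hdvd : (Nat.nth Nat.Prime i) ∣ n
      · have hi : i ≤ n := le_trans (le_trans (by omega) (Nat.add_two_le_nth_prime i))
          (Nat.le_of_dvd hn hdvd)
        have hpm : (Nat.nth Nat.Prime i) ∣ m := Finset.dvd_prod_of_mem _ (Finset.mem_range.mpr (by omega))
        have : (m : ZMod ((Nat.nth Nat.Prime i))) = 0 := (ZMod.natCast_eq_zero_iff m ((Nat.nth Nat.Prime i))).mpr hpm
        simp [nsmul_eq_mul, this]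
      · simp [htcoord i hdvd]
    have hft : f t = 0 := by
      have : (m : ℤ) * f t = 0 := by
        rw [← nsmul_eq_mul, ← map_nsmul, hmt, map_zero]
      rcases mul_eq_zero.mp this with h | h
      · exact absurd h (by exact_mod_cast hmpos.ne')
      · exact h
    have hx : x = n • z + t := by rw [ht]; abel
    refine ⟨f z, ?_⟩
    rw [hx, map_add, map_nsmul, hft, add_zero, nsmul_eq_mul]
  by_contra h
  have := key ((f x).natAbs + 1) (Nat.succ_pos _)
  have habs : (f x).natAbs < (f x).natAbs + 1 := Nat.lt_succ_self _
  have := Int.le_of_dvd (abs_pos.mpr h) ((dvd_abs _ _).mpr this)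
  rw [Int.abs_eq_natAbs] at this
  push_cast at this
  omega
end

section
/- Every homomorphism of abelian groups from the quotient (∏_{i∈ℕ} ℤ/p_iℤ)/(⊕_{i∈ℕ} ℤ/p_iℤ) to ℤ is zero, where p_i is the i-th prime. -/
theorem stmt_18
    (f : (((i : ℕ) → ZMod (Nat.nth Nat.Prime i)) ⧸
        (DFinsupp.coeFnAddMonoidHom : (Π₀ i : ℕ, ZMod (Nat.nth Nat.Prime i)) →+
          ((i : ℕ) → ZMod (Nat.nth Nat.Prime i))).range) →+ ℤ) :
    f = 0 := by
  have hP : ∀ i, (Nat.nth Nat.Prime i).Prime := fun i =>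
    Nat.nth_mem_of_infinite Nat.infinite_setOf_prime i
  haveI : ∀ i, Fact (Nat.nth Nat.Prime i).Prime := fun i => ⟨hP i⟩
  refine AddMonoidHom.ext fun x => ?_
  have key : ∀ q : ℕ, q.Prime → (q : ℤ) ∣ f x := by
    intro q hq
    obtain ⟨g, rfl⟩ := QuotientAddGroup.mk_surjective x
    set i₀ := Nat.count Nat.Prime q with hi₀def
    have hi₀ : Nat.nth Nat.Prime i₀ = q := Nat.nth_count hq
    set y : (i : ℕ) → ZMod (Nat.nth Nat.Prime i) :=
      fun i => (q : ZMod (Nat.nth Nat.Prime i))⁻¹ * g i with hy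
    have hqy : ∀ j, j ≠ i₀ → q • y j = g j := by
      intro j hj
      have hne : Nat.nth Nat.Prime j ≠ q := fun h =>
        hj (Nat.nth_injective Nat.infinite_setOf_prime (h.trans hi₀.symm))
      have hqz : (q : ZMod (Nat.nth Nat.Prime j)) ≠ 0 := by
        rw [Ne, ZMod.natCast_eq_zero_iff]
        exact fun hd => hne ((Nat.prime_dvd_prime_iff_eq (hP j) hq).1 hd)
      rw [hy, nsmul_eq_mul]
      push_cast
      rw [mul_inv_cancel_left₀ hqz]
    have hmem : g - q • y ∈
        (DFinsupp.coeFnAddMonoidHom : (Π₀ i : ℕ, ZMod (Nat.nth Nat.Prime i)) →+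
          ((i : ℕ) → ZMod (Nat.nth Nat.Prime i))).range := by
      refine ⟨DFinsupp.single (β := fun i => ZMod (Nat.nth Nat.Prime i)) i₀ (g i₀ - q • y i₀), ?_⟩
      funext j
      show (DFinsupp.single (β := fun i => ZMod (Nat.nth Nat.Prime i)) i₀ (g i₀ - q • y i₀)) j = (g - q • y) j
      by_cases hj : j = i₀
      · subst hj
        simp
      · rw [DFinsupp.single_apply, dif_neg (Ne.symm hj), Pi.sub_apply, Pi.smul_apply,
          hqy j hj, sub_self]
    have hxy : q • (QuotientAddGroup.mk y :
        ((i : ℕ) → ZMod (Nat.nth Nat.Prime i)) ⧸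
        (DFinsupp.coeFnAddMonoidHom : (Π₀ i : ℕ, ZMod (Nat.nth Nat.Prime i)) →+
          ((i : ℕ) → ZMod (Nat.nth Nat.Prime i))).range) = QuotientAddGroup.mk g := by
      have : (QuotientAddGroup.mk (q • y) :
          ((i : ℕ) → ZMod (Nat.nth Nat.Prime i)) ⧸
          (DFinsupp.coeFnAddMonoidHom : (Π₀ i : ℕ, ZMod (Nat.nth Nat.Prime i)) →+
            ((i : ℕ) → ZMod (Nat.nth Nat.Prime i))).range) = QuotientAddGroup.mk g := by
        rw [QuotientAddGroup.eq_iff_sub_mem]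
        have := neg_mem hmem
        rwa [neg_sub] at this
      rw [← this]
      rfl
    refine ⟨f (QuotientAddGroup.mk y), ?_⟩
    rw [← hxy, map_nsmul, nsmul_eq_mul]
  by_contra hfx
  obtain ⟨q, hq1, hq2⟩ := Nat.exists_infinite_primes ((f x).natAbs + 1)
  have hdvd : q ∣ (f x).natAbs := by
    simpa using Int.natAbs_dvd_natAbs.mpr (key q hq2)
  have := Nat.le_of_dvd (by simpa [Int.natAbs_pos] using hfx) hdvd
  omega
end
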